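/- arXiv:2402.05299 — 4 statements merged into one kernel-verified Lean document; each statement's English description precedes it below -/
import Mathlib

section
/- Let a < b be real numbers, let u be a weight on ℝ, and let λ > 0. Then u({x ∈ ℝ : |Hχ_(a,b)(x)| > λ}) = ∫_{a−ψ(λ)}^{a+φ(λ)} u(s) ds + ∫_{b−φ(λ)}^{b+ψ(λ)} u(s) ds, where φ(λ) = (b−a)/(1+e^{πλ}) and ψ(λ) = (b−a)/(e^{πλ}−1). -/
open MeasureTheory Filter Topology
open scoped ENNReal NNReal

noncomputable section

/-- The `u`-measure of a set `E`, `u(E) = ∫_E u`, as an extended nonnegative real. -/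
def wMeas (u : ℝ → ℝ) (E : Set ℝ) : ℝ≥0∞ := ∫⁻ x in E, ENNReal.ofReal (u x)

/-- The `u`-measure of a set `E`, `u(E) = ∫_E u(x) dx`, as a real number. -/
def wInt (u : ℝ → ℝ) (E : Set ℝ) : ℝ := ∫ x in E, u x

/-- `W(r) = ∫_0^r w(s) ds`. -/
def Wf (w : ℝ → ℝ) (r : ℝ) : ℝ := ∫ t in Set.Ioo (0:ℝ) r, w t

/-- A weight on `ℝ`: a positive locally integrable function. -/
def IsWeight (u : ℝ → ℝ) : Prop :=
  (∀ x, 0 < u x) ∧ MeasureTheory.LocallyIntegrable u volume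

/-- A weight on `(0,∞)`: positive there and locally integrable on `(0,r)` for every `r > 0`. -/
def IsWeightOn (w : ℝ → ℝ) : Prop :=
  (∀ t, 0 < t → 0 < w t) ∧ ∀ r, 0 < r → MeasureTheory.IntegrableOn w (Set.Ioo (0:ℝ) r) volume

/-- Decreasing rearrangement (with respect to the weight `u`) of an `ℝ≥0∞`-valued function. -/
def rearrE (u : ℝ → ℝ) (g : ℝ → ℝ≥0∞) (t : ℝ) : ℝ≥0∞ :=
  sInf {s : ℝ≥0∞ | wMeas u {x | s < g x} ≤ ENNReal.ofReal t}

/-- Decreasing rearrangement `f*_u` of `f` with respect to the weight `u`. -/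
def rearr (u f : ℝ → ℝ) (t : ℝ) : ℝ≥0∞ :=
  rearrE u (fun x => ENNReal.ofReal |f x|) t

/-- The quasinorm of `Λ^p_u(w)` for `ℝ≥0∞`-valued functions. -/
def lorentzNormE (p : ℝ) (u w : ℝ → ℝ) (g : ℝ → ℝ≥0∞) : ℝ≥0∞ :=
  (∫⁻ t in Set.Ioi (0:ℝ), rearrE u g t ^ p * ENNReal.ofReal (w t)) ^ (1/p)

/-- The quasinorm of the weighted Lorentz space `Λ^p_u(w)`. -/
def lorentzNorm (p : ℝ) (u w f : ℝ → ℝ) : ℝ≥0∞ :=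
  lorentzNormE p u w (fun x => ENNReal.ofReal |f x|)

/-- The quasinorm of `Λ^{p,∞}_u(w)` for `ℝ≥0∞`-valued functions. -/
def weakLorentzNormE (p : ℝ) (u w : ℝ → ℝ) (g : ℝ → ℝ≥0∞) : ℝ≥0∞ :=
  ⨆ t ∈ Set.Ioi (0:ℝ), ENNReal.ofReal (Wf w t) ^ (1/p) * rearrE u g t

/-- The quasinorm of the weak weighted Lorentz space `Λ^{p,∞}_u(w)`. -/
def weakLorentzNorm (p : ℝ) (u w f : ℝ → ℝ) : ℝ≥0∞ :=
  weakLorentzNormE p u w (fun x => ENNReal.ofReal |f x|)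

/-- Membership in `Λ^p_u(w)`. -/
def MemLambda (p : ℝ) (u w f : ℝ → ℝ) : Prop :=
  Measurable f ∧ lorentzNorm p u w f < ∞

/-- The quasinorm of the Lorentz space `L^{p,q}(u)`, `0 < q ≤ ∞`. -/
def lpqNorm (p : ℝ) (q : ℝ≥0∞) (u f : ℝ → ℝ) : ℝ≥0∞ :=
  if q = ∞ then ⨆ t ∈ Set.Ioi (0:ℝ), ENNReal.ofReal t ^ (1/p) * rearr u f t
  else (∫⁻ t in Set.Ioi (0:ℝ),
      (ENNReal.ofReal t ^ (1/p) * rearr u f t) ^ q.toReal / ENNReal.ofReal t) ^ (1/q.toReal)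

/-- Membership in `L^{p,q}(u)`. -/
def MemLpq (p : ℝ) (q : ℝ≥0∞) (u f : ℝ → ℝ) : Prop :=
  Measurable f ∧ lpqNorm p q u f < ∞

/-- The associate norm `‖g‖_{(Λ^p_u(w))'}`. -/
def assocNorm (p : ℝ) (u w g : ℝ → ℝ) : ℝ≥0∞ :=
  ⨆ (f : ℝ → ℝ) (_ : MemLambda p u w f) (_ : lorentzNorm p u w f ≠ 0),
    ENNReal.ofReal |∫ x, f x * g x * u x| / lorentzNorm p u w f

/-- The truncated Hilbert integral `∫_{|x−y|>ε} f(y)/(x−y) dy`. -/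
def pvIntegral (f : ℝ → ℝ) (x ε : ℝ) : ℝ :=
  ∫ y in {y : ℝ | ε < |x - y|}, f y / (x - y)

/-- The principal value limit defining `Hf(x)` exists and equals `L`. -/
def HasHilbert (f : ℝ → ℝ) (x L : ℝ) : Prop :=
  Filter.Tendsto (fun ε : ℝ => (1 / Real.pi) * pvIntegral f x ε) (𝓝[>] 0) (𝓝 L)

/-- The Hilbert transform `Hf(x)` (junk value where the principal value does not exist). -/
def hilbert (f : ℝ → ℝ) (x : ℝ) : ℝ :=
  limUnder (𝓝[>] (0:ℝ)) (fun ε => (1 / Real.pi) * pvIntegral f x ε)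

/-- The Hilbert maximal operator `H*f(x)`. -/
def hilbertMax (f : ℝ → ℝ) (x : ℝ) : ℝ≥0∞ :=
  ⨆ ε ∈ Set.Ioi (0:ℝ), ENNReal.ofReal ((1 / Real.pi) * |pvIntegral f x ε|)

/-- The Hardy–Littlewood maximal operator over intervals of `ℝ`. -/
def maxOp (u : ℝ → ℝ) (x : ℝ) : ℝ≥0∞ :=
  ⨆ (a : ℝ) (b : ℝ) (_ : x ∈ Set.Ioo a b),
    (∫⁻ y in Set.Ioo a b, ENNReal.ofReal |u y|) / ENNReal.ofReal (b - a)

/-- The Muckenhoupt class `A_1`: `Mu ≤ C u` a.e. -/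
def A1 (u : ℝ → ℝ) : Prop :=
  ∃ C : ℝ, 0 < C ∧ ∀ᵐ x : ℝ ∂volume, maxOp u x ≤ ENNReal.ofReal (C * u x)

/-- The Muckenhoupt class `A_p`, `p > 1`. -/
def Ap (p : ℝ) (u : ℝ → ℝ) : Prop :=
  ∃ C : ℝ, 0 < C ∧ ∀ a b : ℝ, a < b →
    ((∫⁻ x in Set.Ioo a b, ENNReal.ofReal (u x)) / ENNReal.ofReal (b - a)) *
      ((∫⁻ x in Set.Ioo a b, ENNReal.ofReal (u x ^ (-1 / (p - 1)))) /
        ENNReal.ofReal (b - a)) ^ (p - 1)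
      ≤ ENNReal.ofReal C

/-- The class `B_p`: `∫_r^∞ (r/t)^p w(t) dt ≤ C W(r)`. -/
def Bp (p : ℝ) (w : ℝ → ℝ) : Prop :=
  ∃ C : ℝ, 0 < C ∧ ∀ r : ℝ, 0 < r →
    (∫⁻ t in Set.Ioi r, ENNReal.ofReal ((r / t) ^ p * w t)) ≤ ENNReal.ofReal (C * Wf w r)

/-- The class `B_{p,∞}`: the Hardy operator maps `L^p_dec(w)` to `L^{p,∞}(w)`. -/
def BpInfty (p : ℝ) (w : ℝ → ℝ) : Prop :=
  ∃ C : ℝ, 0 < C ∧ ∀ f : ℝ → ℝ, (∀ t, 0 < t → 0 ≤ f t) → AntitoneOn f (Set.Ioi 0) →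
    ∀ t : ℝ, 0 < t →
      ENNReal.ofReal (Wf w t) ^ (1/p) *
          ((∫⁻ s in Set.Ioo (0:ℝ) t, ENNReal.ofReal (f s)) / ENNReal.ofReal t)
        ≤ ENNReal.ofReal C *
            (∫⁻ s in Set.Ioi (0:ℝ), ENNReal.ofReal (f s) ^ p * ENNReal.ofReal (w s)) ^ (1/p)

/-- The class `B*_∞`: `∫_0^r W(t)/t dt ≤ C W(r)`. -/
def BstarInfty (w : ℝ → ℝ) : Prop :=
  ∃ C : ℝ, 0 < C ∧ ∀ r : ℝ, 0 < r →
    (∫⁻ t in Set.Ioo (0:ℝ) r, ENNReal.ofReal (Wf w t / t)) ≤ ENNReal.ofReal (C * Wf w r)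

/-- The `Δ_2` condition: `W(2r) ≤ C W(r)`. -/
def Delta2 (w : ℝ → ℝ) : Prop :=
  ∃ C : ℝ, 0 < C ∧ ∀ r : ℝ, 0 < r → Wf w (2 * r) ≤ C * Wf w r

/-- A doubling weight on `ℝ`: `u(2I) ≤ C u(I)` for every bounded interval `I`. -/
def DoublingWeight (u : ℝ → ℝ) : Prop :=
  ∃ C : ℝ, 0 < C ∧ ∀ c r : ℝ, 0 < r →
    wInt u (Set.Ioo (c - 2*r) (c + 2*r)) ≤ C * wInt u (Set.Ioo (c - r) (c + r))

/-- `φ_I(t) = sup{|E| : E ⊆ I, u(E) = t}` for `I = (a,b)`. -/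
def phiI (u : ℝ → ℝ) (a b t : ℝ) : ℝ :=
  sSup {m : ℝ | ∃ E : Set ℝ, MeasurableSet E ∧ E ⊆ Set.Ioo a b ∧
    wInt u E = t ∧ (volume E).toReal = m}

/-- The index `p_w`:  `inf{p > 0 : t^p/W(t) ∈ L^{p'-1}((0,1), dt/t)}`, where for `p ≤ 1`
(`p' = ∞`) the condition means essential boundedness on `(0,1)`. -/
def pwIndex (w : ℝ → ℝ) : ℝ :=
  sInf {p : ℝ | 0 < p ∧
    ((p ≤ 1 ∧ ∃ C : ℝ, ∀ᵐ t ∂(volume.restrict (Set.Ioo (0:ℝ) 1)), t ^ p / Wf w t ≤ C) ∨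
     (1 < p ∧ (∫⁻ t in Set.Ioo (0:ℝ) 1,
        ENNReal.ofReal ((t ^ p / Wf w t) ^ (1 / (p - 1)) / t)) < ∞))}



open intervalIntegral in
private lemma ivl_inv' (x c d : ℝ) (h : (0:ℝ) ∉ Set.uIcc (x - d) (x - c)) :
    ∫ y in c..d, (x - y)⁻¹ = Real.log (|x - c| / |x - d|) := by
  rw [show (∫ y in c..d, (x - y)⁻¹) = ∫ y in c..d, (fun t => t⁻¹) (x - y) from rfl,
    integral_comp_sub_left (fun t => t⁻¹) x, integral_inv h,
    ← Real.log_abs, abs_div]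

private lemma intOn_inv' (x c d : ℝ) (h : ∀ y ∈ Set.Icc c d, x - y ≠ 0) :
    IntegrableOn (fun y => (x - y)⁻¹) (Set.Ioo c d) := by
  refine (ContinuousOn.integrableOn_Icc ?_).mono_set Set.Ioo_subset_Icc_self
  exact ((continuous_const.sub continuous_id).continuousOn).inv₀ h

private lemma set_ioo' (x c d : ℝ) (h : c ≤ d) :
    ∫ y in Set.Ioo c d, (x - y)⁻¹ = ∫ y in c..d, (x - y)⁻¹ := by
  rw [intervalIntegral.integral_of_le h, MeasureTheory.integral_Ioc_eq_integral_Ioo]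

private lemma pv_eq' (a b x ε : ℝ) (hab : a < b) (hε : 0 < ε)
    (h1 : ε < |x - a|) (h2 : ε < |x - b|) :
    pvIntegral ((Set.Ioo a b).indicator fun _ => (1:ℝ)) x ε
      = Real.log (|x - a| / |x - b|) := by
  have hset : {y : ℝ | ε < |x - y|} = Set.Iio (x - ε) ∪ Set.Ioi (x + ε) := by
    ext y
    simp only [Set.mem_setOf_eq, Set.mem_union, Set.mem_Iio, Set.mem_Ioi, lt_abs]
    constructor
    · rintro (h | h) <;> [left; right] <;> linarith
    · rintro (h | h) <;> [left; right] <;> linarith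
  have hind : ∀ y : ℝ, (Set.Ioo a b).indicator (fun _ => (1:ℝ)) y / (x - y)
      = (Set.Ioo a b).indicator (fun y => (x - y)⁻¹) y := by
    intro y; by_cases h : y ∈ Set.Ioo a b <;> simp [h, one_div]
  unfold pvIntegral
  simp only [hind]
  rw [setIntegral_indicator measurableSet_Ioo, hset]
  rcases lt_trichotomy x a with hx | hx | hx
  · have hxa : ε < a - x := by rw [abs_sub_comm, abs_of_pos (by linarith)] at h1; linarith
    have : (Set.Iio (x - ε) ∪ Set.Ioi (x + ε)) ∩ Set.Ioo a b = Set.Ioo a b := by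
      ext y
      simp only [Set.mem_inter_iff, Set.mem_union, Set.mem_Iio, Set.mem_Ioi, Set.mem_Ioo]
      constructor
      · tauto
      · intro h; exact ⟨Or.inr (by linarith [h.1]), h⟩
    rw [this, set_ioo' x a b hab.le, ivl_inv']
    intro h
    rw [Set.mem_uIcc] at h
    rcases h with h | h <;> linarith [h.1, h.2]
  · exfalso; rw [hx, sub_self, abs_zero] at h1; linarith
  · rcases lt_trichotomy x b with hx2 | hx2 | hx2
    · have hxa : ε < x - a := by rw [abs_of_pos (by linarith)] at h1; linarith
      have hxb : ε < b - x := by rw [abs_sub_comm, abs_of_pos (by linarith)] at h2; linarith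
      have hs : (Set.Iio (x - ε) ∪ Set.Ioi (x + ε)) ∩ Set.Ioo a b
          = Set.Ioo a (x - ε) ∪ Set.Ioo (x + ε) b := by
        ext y
        simp only [Set.mem_inter_iff, Set.mem_union, Set.mem_Iio, Set.mem_Ioi, Set.mem_Ioo]
        constructor
        · rintro ⟨h | h, h3, h4⟩ <;> [left; right] <;> exact ⟨by linarith, by linarith⟩
        · rintro (⟨h3, h4⟩ | ⟨h3, h4⟩)
          · exact ⟨Or.inl (by linarith), by linarith, by linarith⟩
          · exact ⟨Or.inr (by linarith), by linarith, by linarith⟩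
      rw [hs, setIntegral_union (by
            rw [Set.disjoint_left]; rintro y ⟨_, h4⟩ ⟨h5, _⟩; linarith)
          measurableSet_Ioo
          (intOn_inv' x a (x - ε) (fun y hy => by have := hy.2; intro h; linarith))
          (intOn_inv' x (x + ε) b (fun y hy => by have := hy.1; intro h; linarith)),
        set_ioo' x a (x - ε) (by linarith), set_ioo' x (x + ε) b (by linarith),
        ivl_inv' x a (x - ε) (by
          intro h; rw [Set.mem_uIcc] at h; rcases h with h | h <;>
          · simp only [sub_sub_cancel] at h; linarith [h.1, h.2]),
        ivl_inv' x (x + ε) b (by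
          intro h; rw [Set.mem_uIcc] at h; rcases h with h | h <;>
          · simp only [sub_add_cancel_left] at h; linarith [h.1, h.2])]
      have e1 : |x - a| = x - a := abs_of_pos (by linarith)
      have e2 : |x - (x - ε)| = ε := by rw [sub_sub_cancel, abs_of_pos hε]
      have e3 : |x - (x + ε)| = ε := by
        rw [show x - (x + ε) = -ε by ring, abs_neg, abs_of_pos hε]
      have e4 : |x - b| = b - x := by rw [abs_sub_comm]; exact abs_of_pos (by linarith)
      rw [e1, e2, e3, e4, ← Real.log_mul (div_pos (by linarith) hε).ne'
        (div_pos hε (by linarith)).ne']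
      congr 1
      field_simp
    · exfalso; rw [hx2, sub_self, abs_zero] at h2; linarith
    · have hxb : ε < x - b := by rw [abs_of_pos (by linarith)] at h2; linarith
      have : (Set.Iio (x - ε) ∪ Set.Ioi (x + ε)) ∩ Set.Ioo a b = Set.Ioo a b := by
        ext y
        simp only [Set.mem_inter_iff, Set.mem_union, Set.mem_Iio, Set.mem_Ioi, Set.mem_Ioo]
        constructor
        · tauto
        · intro h; exact ⟨Or.inl (by linarith [h.2]), h⟩
      rw [this, set_ioo' x a b hab.le, ivl_inv']
      intro h
      rw [Set.mem_uIcc] at h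
      rcases h with h | h <;> linarith [h.1, h.2]

private lemma hilbert_eq' (a b : ℝ) (hab : a < b) (x : ℝ) (hxa : x ≠ a) (hxb : x ≠ b) :
    hilbert ((Set.Ioo a b).indicator fun _ => (1:ℝ)) x
      = (1 / Real.pi) * Real.log (|x - a| / |x - b|) := by
  apply Filter.Tendsto.limUnder_eq
  have ha : 0 < |x - a| := abs_pos.mpr (sub_ne_zero.mpr hxa)
  have hb : 0 < |x - b| := abs_pos.mpr (sub_ne_zero.mpr hxb)
  apply Filter.Tendsto.congr' _ tendsto_const_nhds
  filter_upwards [Ioo_mem_nhdsGT_of_mem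
    (Set.mem_Ico.mpr ⟨le_refl (0:ℝ), lt_min ha hb⟩)] with ε hε
  rw [pv_eq' a b x ε hab hε.1 (lt_of_lt_of_le hε.2 (min_le_left _ _))
    (lt_of_lt_of_le hε.2 (min_le_right _ _))]

private lemma key' (a b e : ℝ) (hab : a < b) (he : 1 < e) (x : ℝ) :
    e * |x - b| < |x - a| ↔
      b - (b - a) / (1 + e) < x ∧ x < b + (b - a) / (e - 1) := by
  have h1e : (0:ℝ) < 1 + e := by linarith
  have he1 : (0:ℝ) < e - 1 := by linarith
  have r1 : b - (b - a) / (1 + e) < x ↔ (b - x) * (1 + e) < b - a := by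
    rw [sub_lt_comm, ← lt_div_iff₀ h1e]
  have r2 : x < b + (b - a) / (e - 1) ↔ (x - b) * (e - 1) < b - a := by
    rw [← sub_lt_iff_lt_add', ← lt_div_iff₀ he1]
  rw [r1, r2]
  constructor
  · intro h
    rcases abs_cases (x - b) with ⟨h1, h2⟩ | ⟨h1, h2⟩ <;>
      rcases abs_cases (x - a) with ⟨h3, h4⟩ | ⟨h3, h4⟩ <;>
      rw [h1, h3] at h <;> constructor <;> nlinarith
  · rintro ⟨h1, h2⟩
    rcases abs_cases (x - b) with ⟨h3, h4⟩ | ⟨h3, h4⟩ <;>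
      rcases abs_cases (x - a) with ⟨h5, h6⟩ | ⟨h5, h6⟩ <;>
      rw [h3, h5] <;> nlinarith

private lemma key2' (a b e : ℝ) (hab : a < b) (he : 1 < e) (x : ℝ) :
    e * |x - a| < |x - b| ↔
      a - (b - a) / (e - 1) < x ∧ x < a + (b - a) / (1 + e) := by
  have h := key' (-b) (-a) e (by linarith) he (-x)
  have e1 : |-x - -b| = |x - b| := by rw [show -x - -b = -(x - b) by ring, abs_neg]
  have e2 : |-x - -a| = |x - a| := by rw [show -x - -a = -(x - a) by ring, abs_neg]
  have e3 : -a - -b = b - a := by ring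
  rw [e1, e2, e3] at h
  rw [h]
  constructor <;> rintro ⟨u1, u2⟩ <;> constructor <;> linarith

private lemma pointwise' (a b lam : ℝ) (hab : a < b) (hlam : 0 < lam) (x : ℝ)
    (hxa : x ≠ a) (hxb : x ≠ b) :
    lam < |hilbert ((Set.Ioo a b).indicator fun _ => (1:ℝ)) x| ↔
      x ∈ Set.Ioo (a - (b - a) / (Real.exp (Real.pi * lam) - 1))
            (a + (b - a) / (1 + Real.exp (Real.pi * lam))) ∪
        Set.Ioo (b - (b - a) / (1 + Real.exp (Real.pi * lam)))
            (b + (b - a) / (Real.exp (Real.pi * lam) - 1)) := by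
  have ha : 0 < |x - a| := abs_pos.mpr (sub_ne_zero.mpr hxa)
  have hb : 0 < |x - b| := abs_pos.mpr (sub_ne_zero.mpr hxb)
  set E := Real.exp (Real.pi * lam) with hE
  have hE1 : 1 < E := by
    rw [hE, show (1:ℝ) = Real.exp 0 from (Real.exp_zero).symm]
    exact Real.exp_lt_exp.mpr (by positivity)
  have hE0 : 0 < E := by linarith
  have hr : 0 < |x - a| / |x - b| := div_pos ha hb
  rw [hilbert_eq' a b hab x hxa hxb, abs_mul,
    abs_of_pos (one_div_pos.mpr Real.pi_pos), one_div, inv_mul_eq_div,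
    lt_div_iff₀ Real.pi_pos, lt_abs]
  have c1 : lam * Real.pi < Real.log (|x - a| / |x - b|) ↔ E * |x - b| < |x - a| := by
    rw [Real.lt_log_iff_exp_lt hr, mul_comm lam Real.pi, ← hE, lt_div_iff₀ hb]
  have c2 : lam * Real.pi < -Real.log (|x - a| / |x - b|) ↔ E * |x - a| < |x - b| := by
    rw [lt_neg, ← Real.log_exp (-(lam * Real.pi)), Real.log_lt_log_iff hr (Real.exp_pos _),
      Real.exp_neg, mul_comm lam Real.pi, ← hE, div_lt_iff₀ hb,
      lt_inv_mul_iff₀ hE0]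
  rw [c1, c2, key' a b E hab hE1 x, key2' a b E hab hE1 x, Set.mem_union,
    Set.mem_Ioo, Set.mem_Ioo, or_comm]

/-- distribution function of `Hχ_(a,b)` with respect to the weight `u`. -/
theorem distribution_hilbert_indicator (u : ℝ → ℝ) (hu : IsWeight u)
    (a b : ℝ) (hab : a < b) (lam : ℝ) (hlam : 0 < lam) :
    wInt u {x : ℝ | lam < |hilbert ((Set.Ioo a b).indicator fun _ => (1:ℝ)) x|}
      = (∫ s in Set.Ioo (a - (b - a) / (Real.exp (Real.pi * lam) - 1))
            (a + (b - a) / (1 + Real.exp (Real.pi * lam))), u s)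
        + ∫ s in Set.Ioo (b - (b - a) / (1 + Real.exp (Real.pi * lam)))
            (b + (b - a) / (Real.exp (Real.pi * lam) - 1)), u s := by
  set E := Real.exp (Real.pi * lam) with hE
  have hE1 : 1 < E := by
    rw [hE, show (1:ℝ) = Real.exp 0 from (Real.exp_zero).symm]
    exact Real.exp_lt_exp.mpr (by positivity)
  set ps := (b - a) / (E - 1) with hps
  set ph := (b - a) / (1 + E) with hph
  have hba : 0 < b - a := by linarith
  have hae : {x : ℝ | lam < |hilbert ((Set.Ioo a b).indicator fun _ => (1:ℝ)) x|}
      =ᵐ[volume] ((Set.Ioo (a - ps) (a + ph) ∪ Set.Ioo (b - ph) (b + ps) : Set ℝ)) := by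
    rw [Filter.eventuallyEq_set]
    have hnull : (volume : Measure ℝ) {a, b} = 0 :=
      (Set.toFinite _).measure_zero volume
    filter_upwards [measure_eq_zero_iff_ae_notMem.mp hnull] with x hx
    simp only [Set.mem_insert_iff, Set.mem_singleton_iff, not_or] at hx
    exact pointwise' a b lam hab hlam x hx.1 hx.2
  have hint : ∀ c d : ℝ, IntegrableOn u (Set.Ioo c d) volume := fun c d =>
    (hu.2.integrableOn_isCompact isCompact_Icc).mono_set Set.Ioo_subset_Icc_self
  have hd : a + ph ≤ b - ph := by
    have : ph ≤ (b - a) / 2 := by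
      rw [hph, div_le_div_iff₀ (by linarith) (by norm_num)]
      nlinarith
    linarith
  have hdisj : Disjoint (Set.Ioo (a - ps) (a + ph)) (Set.Ioo (b - ph) (b + ps)) := by
    rw [Set.disjoint_left]
    rintro y ⟨_, h2⟩ ⟨h3, _⟩
    linarith
  unfold wInt
  rw [setIntegral_congr_set hae, setIntegral_union hdisj measurableSet_Ioo
    (hint _ _) (hint _ _)]
end
end

section
/- Let 0 < p < ∞ and let u, w be weights on ℝ and (0,∞) respectively. Suppose there is a constant C such that for every b > 0, ‖Hχ_(0,b)‖_{Λ^{p,∞}_u(w)} ≤ C ‖χ_(0,b)‖_{Λ^p_u(w)}. Then there is a constant C′ such that for every ν ∈ (0,1] and every b > 0, W(∫_{−bν}^{bν} u(s) ds) ≤ C′ (1 + log(1/ν))^{−p} · W(∫_{−b}^{b} u(s) ds). -/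
/-!
For `χ = χ_(0,b)` the principal value is explicit, `Hχ(x) = π⁻¹ log |x / (x - b)|`, so
`|Hχ| ≥ π⁻¹ log (b / (4ρ))` on `(-2ρ, 2ρ) \ {0}` whenever `4ρ ≤ b`. That set has `u`-measure
larger than `t = u(-ρ, ρ)`, hence `(Hχ)*_u(t)` is at least this bound, and testing the weak-type
inequality at `t` against `‖χ‖_{Λ^p_u(w)} ≤ W(u(0, b))^{1/p}` gives
`W(u(-ρ, ρ))^{1/p} log (b / (4ρ)) ≲ W(u(-b, b))^{1/p}`. With `ρ = bν` this is the estimate for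
`ν ≤ 1/16`, where `log (1 / (4ν)) ≥ (1 + log (1/ν)) / 4`; for `ν > 1/16` the factor
`1 + log (1/ν)` is at most `4` and monotonicity of `W` suffices.
-/

open MeasureTheory Filter Topology
open scoped ENNReal NNReal

noncomputable section

open Real

lemma integral_inv_sub {x c d : ℝ} (hx : x ∉ Set.uIcc c d) :
    ∫ y in c..d, (x - y)⁻¹ = log ((x - c) / (x - d)) := by
  rw [intervalIntegral.integral_comp_sub_left (fun t => t⁻¹) x, integral_inv]
  refine fun h => hx ?_
  rw [Set.mem_uIcc] at h ⊢
  rcases h with ⟨_, _⟩ | ⟨_, _⟩ <;> [left; right] <;> constructor <;> linarith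

lemma integrableOn_inv_sub {x c d : ℝ} (hx : x ∉ Set.Icc c d) :
    IntegrableOn (fun y => (x - y)⁻¹) (Set.Ioo c d) :=
  (ContinuousOn.integrableOn_Icc (ContinuousOn.inv₀ (by fun_prop)
    fun y hy h => hx (by rwa [sub_eq_zero.mp h]))).mono_set Set.Ioo_subset_Icc_self

lemma setIntegral_Ioo_inv_sub {x c d : ℝ} (hcd : c ≤ d) (hx : x ∉ Set.Icc c d) :
    ∫ y in Set.Ioo c d, (x - y)⁻¹ = log ((x - c) / (x - d)) := by
  rw [← integral_Ioc_eq_integral_Ioo, ← intervalIntegral.integral_of_le hcd,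
    integral_inv_sub (by rwa [Set.uIcc_of_le hcd])]

lemma pvIntegral_indicator (s : Set ℝ) (hs : MeasurableSet s) (x ε : ℝ) :
    pvIntegral (s.indicator fun _ => (1:ℝ)) x ε = ∫ y in {y | ε < |x - y|} ∩ s, (x - y)⁻¹ := by
  rw [pvIntegral, Set.inter_comm, ← Measure.restrict_restrict hs, ← integral_indicator hs]
  congr 1 with y
  by_cases hy : y ∈ s <;> simp [hy, one_div]

lemma pvIntegral_indicator_Ioo {a b x ε : ℝ} (hab : a < b) (hε : 0 < ε) (hεa : ε < |x - a|)
    (hεb : ε < |x - b|) :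
    pvIntegral ((Set.Ioo a b).indicator fun _ => (1:ℝ)) x ε = log ((x - a) / (x - b)) := by
  rw [pvIntegral_indicator _ measurableSet_Ioo]
  by_cases hx : x ∈ Set.Ioo a b
  · rw [abs_of_pos (sub_pos.mpr hx.1)] at hεa
    rw [abs_of_neg (sub_neg.mpr hx.2)] at hεb
    have hsplit : {y | ε < |x - y|} ∩ Set.Ioo a b = Set.Ioo a (x - ε) ∪ Set.Ioo (x + ε) b := by
      ext y
      simp only [Set.mem_inter_iff, Set.mem_ofPred_eq, Set.mem_Ioo, Set.mem_union, lt_abs, neg_sub]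
      constructor
      · rintro ⟨h | h, _, _⟩ <;> [left; right] <;> constructor <;> linarith
      · rintro (⟨_, _⟩ | ⟨_, _⟩) <;> [refine ⟨Or.inl ?_, ?_, ?_⟩; refine ⟨Or.inr ?_, ?_, ?_⟩] <;>
          linarith
    have hdisj : Disjoint (Set.Ioo a (x - ε)) (Set.Ioo (x + ε) b) :=
      Set.disjoint_left.mpr fun y h1 h2 => by linarith [h1.2, h2.1]
    rw [hsplit, setIntegral_union hdisj measurableSet_Ioo
        (integrableOn_inv_sub fun h => by linarith [h.2])
        (integrableOn_inv_sub fun h => by linarith [h.1]),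
      setIntegral_Ioo_inv_sub (by linarith) fun h => by linarith [h.2],
      setIntegral_Ioo_inv_sub (by linarith) fun h => by linarith [h.1],
      ← log_mul (div_pos (by linarith) (by linarith)).ne' (div_ne_zero (by linarith) (by linarith)),
      ← log_neg_eq_log]
    congr 1
    rw [show x - (x - ε) = ε by ring, show x - (x + ε) = -ε by ring]
    field_simp
  · have hax : a ≠ x := fun h => by rw [h, sub_self, abs_zero] at hεa; linarith
    have hxb : x ≠ b := fun h => by rw [h, sub_self, abs_zero] at hεb; linarith
    have hout : x ∉ Set.Icc a b := fun h => hx ⟨h.1.lt_of_ne hax, h.2.lt_of_ne hxb⟩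
    have hfull : {y | ε < |x - y|} ∩ Set.Ioo a b = Set.Ioo a b := by
      refine Set.inter_eq_right.mpr fun y hy => ?_
      rcases not_and_or.mp hout with h | h
      · rw [not_le] at h
        rw [abs_of_neg (sub_neg.mpr h)] at hεa
        rw [Set.mem_ofPred_eq, abs_of_neg (by linarith [hy.1])]
        linarith [hy.1]
      · rw [not_le] at h
        rw [abs_of_pos (sub_pos.mpr h)] at hεb
        rw [Set.mem_ofPred_eq, abs_of_pos (by linarith [hy.2])]
        linarith [hy.2]
    rw [hfull, setIntegral_Ioo_inv_sub hab.le hout]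

lemma hilbert_eq_of_eventually_eq {f : ℝ → ℝ} {x L : ℝ}
    (h : ∀ᶠ ε in 𝓝[>] 0, pvIntegral f x ε = L) : hilbert f x = π⁻¹ * L :=
  Tendsto.limUnder_eq <| tendsto_const_nhds.congr' <| h.mono fun ε hε => by simp only [hε, one_div]

/-- Inside `(a, b)` the quotient is negative: `Real.log` is even, so this is
`π⁻¹ log |(x - a) / (x - b)|` everywhere. -/
lemma hilbert_indicator_Ioo {a b x : ℝ} (hab : a < b) (hxa : x ≠ a) (hxb : x ≠ b) :
    hilbert ((Set.Ioo a b).indicator fun _ => (1:ℝ)) x = π⁻¹ * log ((x - a) / (x - b)) := by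
  apply hilbert_eq_of_eventually_eq
  have hpos : 0 < min |x - a| |x - b| := lt_min (abs_pos.mpr (sub_ne_zero.mpr hxa))
    (abs_pos.mpr (sub_ne_zero.mpr hxb))
  filter_upwards [Ioo_mem_nhdsGT hpos] with ε hε
  exact pvIntegral_indicator_Ioo hab hε.1 (hε.2.trans_le (min_le_left _ _))
    (hε.2.trans_le (min_le_right _ _))

lemma log_le_abs_hilbert_indicator {b x : ℝ} (hx : x ≠ 0) (hxb : |x| ≤ b / 2) :
    π⁻¹ * log (b / (2 * |x|)) ≤ |hilbert ((Set.Ioo 0 b).indicator fun _ => (1:ℝ)) x| := by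
  have hx' : 0 < |x| := abs_pos.mpr hx
  have hb : 0 < b := by linarith
  have hbx : b / 2 ≤ |x - b| := by
    rw [abs_sub_comm]; linarith [abs_sub_abs_le_abs_sub b x, abs_of_pos hb]
  rw [hilbert_indicator_Ioo hb hx (by rintro rfl; linarith [le_abs_self x]), sub_zero, abs_mul, abs_of_pos (inv_pos.mpr pi_pos)]
  gcongr
  calc log (b / (2 * |x|)) ≤ log (|x - b| / |x|) :=
        log_le_log (by positivity) (by rw [div_le_div_iff₀ (by positivity) hx']; nlinarith)
    _ = -log (x / (x - b)) := by rw [← abs_div, log_abs, ← log_inv, inv_div]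
    _ ≤ |log (x / (x - b))| := neg_le_abs _

namespace IsWeight

variable {u : ℝ → ℝ}

lemma integrableOn_Ioo (hu : IsWeight u) (a b : ℝ) : IntegrableOn u (Set.Ioo a b) :=
  (hu.2.integrableOn_isCompact isCompact_Icc).mono_set Set.Ioo_subset_Icc_self

lemma wMeas_Ioo (hu : IsWeight u) (a b : ℝ) :
    wMeas u (Set.Ioo a b) = ENNReal.ofReal (∫ s in Set.Ioo a b, u s) :=
  (ofReal_integral_eq_lintegral_ofReal (hu.integrableOn_Ioo a b)
    (Eventually.of_forall fun x => (hu.1 x).le)).symm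

lemma setIntegral_Ioo_pos (hu : IsWeight u) {a b : ℝ} (hab : a < b) :
    0 < ∫ s in Set.Ioo a b, u s := by
  rw [setIntegral_pos_iff_support_of_nonneg_ae (Eventually.of_forall fun x => (hu.1 x).le)
    (hu.integrableOn_Ioo a b), Function.support_eq_univ fun x => (hu.1 x).ne', Set.univ_inter,
    Real.volume_Ioo]
  simpa using hab

lemma setIntegral_Ioo_mono (hu : IsWeight u) {a a' b b' : ℝ} (ha : a' ≤ a) (hb : b ≤ b') :
    ∫ s in Set.Ioo a b, u s ≤ ∫ s in Set.Ioo a' b', u s :=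
  setIntegral_mono_set (hu.integrableOn_Ioo a' b') (Eventually.of_forall fun x => (hu.1 x).le)
    (Set.Ioo_subset_Ioo ha hb).eventuallyLE

lemma setIntegral_Ioo_lt (hu : IsWeight u) {a a' b b' : ℝ} (ha : a' ≤ a) (hab : a < b)
    (hb : b < b') : ∫ s in Set.Ioo a b, u s < ∫ s in Set.Ioo a' b', u s := by
  have hdisj : Disjoint (Set.Ioo a b) (Set.Ioo b b') :=
    Set.disjoint_left.mpr fun x h1 h2 => by linarith [h1.2, h2.1]
  have hsub : Set.Ioo a b ∪ Set.Ioo b b' ⊆ Set.Ioo a' b' := Set.union_subset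
    (Set.Ioo_subset_Ioo ha hb.le) (Set.Ioo_subset_Ioo (by linarith) le_rfl)
  calc ∫ s in Set.Ioo a b, u s
      < (∫ s in Set.Ioo a b, u s) + ∫ s in Set.Ioo b b', u s :=
        lt_add_of_pos_right _ (hu.setIntegral_Ioo_pos hb)
    _ = ∫ s in Set.Ioo a b ∪ Set.Ioo b b', u s :=
        (setIntegral_union hdisj measurableSet_Ioo (hu.integrableOn_Ioo a b)
          (hu.integrableOn_Ioo b b')).symm
    _ ≤ ∫ s in Set.Ioo a' b', u s :=
        setIntegral_mono_set (hu.integrableOn_Ioo a' b')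
          (Eventually.of_forall fun x => (hu.1 x).le) hsub.eventuallyLE

end IsWeight

namespace IsWeightOn

variable {w : ℝ → ℝ}

lemma Wf_nonneg (hw : IsWeightOn w) (r : ℝ) : 0 ≤ Wf w r :=
  setIntegral_nonneg measurableSet_Ioo fun t ht => (hw.1 t ht.1).le

lemma monotone_Wf (hw : IsWeightOn w) : Monotone (Wf w) := by
  intro r R hrR
  rcases le_or_gt R 0 with hR | hR
  · simp [Wf, Set.Ioo_eq_empty_of_le (hrR.trans hR), Set.Ioo_eq_empty_of_le hR]
  · exact setIntegral_mono_set (hw.2 R hR)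
      (ae_restrict_of_forall_mem measurableSet_Ioo fun t ht => (hw.1 t ht.1).le)
      (Set.Ioo_subset_Ioo le_rfl hrR).eventuallyLE

lemma ofReal_Wf (hw : IsWeightOn w) (r : ℝ) :
    ENNReal.ofReal (Wf w r) = ∫⁻ t in Set.Ioo 0 r, ENNReal.ofReal (w t) := by
  rcases le_or_gt r 0 with hr | hr
  · simp [Wf, Set.Ioo_eq_empty_of_le hr]
  · exact ofReal_integral_eq_lintegral_ofReal (hw.2 r hr)
      (ae_restrict_of_forall_mem measurableSet_Ioo fun t ht => (hw.1 t ht.1).le)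

end IsWeightOn

lemma le_rearrE_of_ae_le {u : ℝ → ℝ} {g : ℝ → ℝ≥0∞} {E : Set ℝ} {s : ℝ≥0∞} {t : ℝ}
    (hg : ∀ᵐ x, x ∈ E → s ≤ g x) (ht : ENNReal.ofReal t < wMeas u E) : s ≤ rearrE u g t := by
  refine le_sInf fun s' hs' => not_lt.mp fun hs's => ?_
  have hE : wMeas u E ≤ wMeas u {x | s' < g x} :=
    lintegral_mono_set' (hg.mono fun x hx hxE => hs's.trans_le (hx hxE))
  exact (ht.trans_le (hE.trans hs')).false

lemma rearr_indicator_le_one (u : ℝ → ℝ) (S : Set ℝ) (t : ℝ) :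
    rearr u (S.indicator fun _ => (1:ℝ)) t ≤ 1 := by
  refine sInf_le ?_
  have hempty : {x | 1 < ENNReal.ofReal |S.indicator (fun _ => (1:ℝ)) x|} = ∅ := by
    ext x
    by_cases hx : x ∈ S <;> simp [hx]
  rw [Set.mem_ofPred_eq, hempty, wMeas, Measure.restrict_empty, lintegral_zero_measure]
  exact zero_le

lemma rearr_indicator_eq_zero {u : ℝ → ℝ} {S : Set ℝ} {t : ℝ}
    (ht : wMeas u S ≤ ENNReal.ofReal t) : rearr u (S.indicator fun _ => (1:ℝ)) t = 0 := by
  refine le_antisymm (sInf_le ?_) bot_le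
  have hsub : {x | 0 < ENNReal.ofReal |S.indicator (fun _ => (1:ℝ)) x|} ⊆ S := fun x hx => by
    by_contra hxS
    simp [hxS] at hx
  exact (lintegral_mono_set hsub).trans ht

lemma lorentzNorm_indicator_le {p : ℝ} (hp : 0 < p) {u w : ℝ → ℝ} (hw : IsWeightOn w)
    {S : Set ℝ} {m : ℝ} (hS : wMeas u S ≤ ENNReal.ofReal m) :
    lorentzNorm p u w (S.indicator fun _ => (1:ℝ)) ≤ ENNReal.ofReal (Wf w m) ^ (1 / p) := by
  refine ENNReal.rpow_le_rpow ?_ (by positivity)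
  have hpoint : ∀ t ∈ Set.Ioi (0:ℝ), rearr u (S.indicator fun _ => (1:ℝ)) t ^ p *
      ENNReal.ofReal (w t) ≤ (Set.Ioo 0 m).indicator (fun t => ENNReal.ofReal (w t)) t := by
    intro t ht
    by_cases htm : t < m
    · rw [Set.indicator_of_mem (Set.mem_Ioo.mpr ⟨ht, htm⟩)]
      calc _ ≤ 1 ^ p * ENNReal.ofReal (w t) := by
            gcongr; exact rearr_indicator_le_one u S t
        _ = ENNReal.ofReal (w t) := by rw [ENNReal.one_rpow, one_mul]
    · rw [rearr_indicator_eq_zero (hS.trans (ENNReal.ofReal_le_ofReal (not_lt.mp htm))),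
        ENNReal.zero_rpow_of_pos hp, zero_mul]
      exact zero_le
  calc (∫⁻ t in Set.Ioi 0, rearr u (S.indicator fun _ => (1:ℝ)) t ^ p * ENNReal.ofReal (w t))
      ≤ ∫⁻ t in Set.Ioi 0, (Set.Ioo 0 m).indicator (fun t => ENNReal.ofReal (w t)) t :=
        setLIntegral_mono' measurableSet_Ioi hpoint
    _ = ENNReal.ofReal (Wf w m) := by
        rw [lintegral_indicator measurableSet_Ioo, Measure.restrict_restrict measurableSet_Ioo,
          Set.inter_eq_left.mpr Set.Ioo_subset_Ioi_self, hw.ofReal_Wf]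

lemma ofReal_Wf_rpow_mul_log_le_weakLorentzNorm_hilbert {p : ℝ} {u w : ℝ → ℝ} (hu : IsWeight u) {b ρ : ℝ} (hρ : 0 < ρ) (hρb : 4 * ρ ≤ b) :
    ENNReal.ofReal (Wf w (∫ s in Set.Ioo (-ρ) ρ, u s)) ^ (1 / p) *
        ENNReal.ofReal (π⁻¹ * log (b / (4 * ρ)))
      ≤ weakLorentzNorm p u w (hilbert ((Set.Ioo 0 b).indicator fun _ => (1:ℝ))) := by
  set t := ∫ s in Set.Ioo (-ρ) ρ, u s
  have hbound : ∀ᵐ x, x ∈ Set.Ioo (-(2 * ρ)) (2 * ρ) →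
      ENNReal.ofReal (π⁻¹ * log (b / (4 * ρ))) ≤
        ENNReal.ofReal |hilbert ((Set.Ioo 0 b).indicator fun _ => (1:ℝ)) x| := by
    filter_upwards [Measure.ae_ne volume 0] with x hx0 hx
    have hx2ρ : 2 * |x| ≤ 4 * ρ := by linarith [abs_lt.mpr hx]
    refine ENNReal.ofReal_le_ofReal ((log_le_abs_hilbert_indicator hx0 (by linarith)).trans' ?_)
    have hb : 0 < b := by linarith
    have := abs_pos.mpr hx0
    gcongr
  have hlt : ENNReal.ofReal t < wMeas u (Set.Ioo (-(2 * ρ)) (2 * ρ)) := by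
    rw [hu.wMeas_Ioo,
      ENNReal.ofReal_lt_ofReal_iff_of_nonneg (hu.setIntegral_Ioo_pos (by linarith)).le]
    exact hu.setIntegral_Ioo_lt (by linarith) (by linarith) (by linarith)
  calc _ ≤ ENNReal.ofReal (Wf w t) ^ (1 / p) * rearrE u
        (fun x => ENNReal.ofReal |hilbert ((Set.Ioo 0 b).indicator fun _ => (1:ℝ)) x|) t := by
        gcongr; exact le_rearrE_of_ae_le hbound hlt
    _ ≤ _ := le_biSup (fun t => ENNReal.ofReal (Wf w t) ^ (1 / p) * rearrE u _ t)
        (hu.setIntegral_Ioo_pos (by linarith) : 0 < t)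

def HilbertWeakTypeOnIntervals (p : ℝ) (u w : ℝ → ℝ) (C : ℝ) : Prop :=
  ∀ b : ℝ, 0 < b →
    weakLorentzNorm p u w (hilbert ((Set.Ioo (0:ℝ) b).indicator fun _ => (1:ℝ)))
      ≤ ENNReal.ofReal C * lorentzNorm p u w ((Set.Ioo (0:ℝ) b).indicator fun _ => (1:ℝ))

lemma Wf_rpow_mul_log_le {p : ℝ} (hp : 0 < p) {u w : ℝ → ℝ} (hu : IsWeight u)
    (hw : IsWeightOn w) {C : ℝ} (hC : 0 ≤ C)
    (hH : HilbertWeakTypeOnIntervals p u w C)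
    {b ρ : ℝ} (hρ : 0 < ρ) (hρb : 4 * ρ ≤ b) :
    Wf w (∫ s in Set.Ioo (-ρ) ρ, u s) ^ (1 / p) * (π⁻¹ * log (b / (4 * ρ)))
      ≤ C * Wf w (∫ s in Set.Ioo (-b) b, u s) ^ (1 / p) := by
  have hb : 0 < b := by linarith
  have hχ : wMeas u (Set.Ioo 0 b) ≤ ENNReal.ofReal (∫ s in Set.Ioo (-b) b, u s) :=
    hu.wMeas_Ioo (-b) b ▸ lintegral_mono_set (Set.Ioo_subset_Ioo (by linarith) le_rfl)
  have hW := hw.Wf_nonneg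
  rw [← ENNReal.ofReal_le_ofReal_iff (mul_nonneg hC (rpow_nonneg (hW _) _)),
    ENNReal.ofReal_mul (rpow_nonneg (hW _) _), ENNReal.ofReal_mul hC,
    ← ENNReal.ofReal_rpow_of_nonneg (hW _) (by positivity),
    ← ENNReal.ofReal_rpow_of_nonneg (hW _) (by positivity)]
  calc _ ≤ weakLorentzNorm p u w (hilbert ((Set.Ioo 0 b).indicator fun _ => (1:ℝ))) :=
        ofReal_Wf_rpow_mul_log_le_weakLorentzNorm_hilbert hu hρ hρb
    _ ≤ ENNReal.ofReal C * lorentzNorm p u w ((Set.Ioo 0 b).indicator fun _ => (1:ℝ)) := hH b hb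
    _ ≤ _ := by gcongr; exact lorentzNorm_indicator_le hp hw hχ

lemma one_add_log_one_div_le_four_mul_log {ν : ℝ} (hν : 0 < ν) (hν16 : ν ≤ 1 / 16) :
    1 + log (1 / ν) ≤ 4 * log (1 / (4 * ν)) := by
  have h16 : 4 * log 2 ≤ log (1 / ν) := by
    rw [show 4 * log 2 = log (2 ^ 4) by rw [log_pow]; norm_num]
    exact log_le_log (by norm_num) (by rw [le_div_iff₀ hν]; linarith)
  have h4 : log (1 / (4 * ν)) = log (1 / ν) - 2 * log 2 := by
    rw [show 1 / (4 * ν) = 1 / ν / 2 ^ 2 by ring, log_div (by positivity) (by norm_num), log_pow]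
    push_cast; ring
  linarith [log_two_gt_d9]

lemma one_add_log_one_div_le_four {ν : ℝ} (hν16 : 1 / 16 < ν) : 1 + log (1 / ν) ≤ 4 := by
  have h16 : log (1 / ν) ≤ 4 * log 2 := by
    rw [show 4 * log 2 = log (2 ^ 4) by rw [log_pow]; norm_num]
    exact log_le_log (by positivity) (by rw [div_le_iff₀ (by linarith)]; linarith)
  linarith [log_two_lt_d9]

lemma one_add_log_mul_Wf_rpow_le {p : ℝ} (hp : 0 < p) {u w : ℝ → ℝ} (hu : IsWeight u)
    (hw : IsWeightOn w) {C : ℝ} (hC : 0 ≤ C)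
    (hH : HilbertWeakTypeOnIntervals p u w C)
    {ν : ℝ} (hν : ν ∈ Set.Ioc (0:ℝ) 1) {b : ℝ} (hb : 0 < b) :
    (1 + log (1 / ν)) * Wf w (∫ s in Set.Ioo (-(b * ν)) (b * ν), u s) ^ (1 / p)
      ≤ 4 * max (π * C) 1 * Wf w (∫ s in Set.Ioo (-b) b, u s) ^ (1 / p) := by
  set a := Wf w (∫ s in Set.Ioo (-(b * ν)) (b * ν), u s) ^ (1 / p)
  set c := Wf w (∫ s in Set.Ioo (-b) b, u s) ^ (1 / p)
  have ha : 0 ≤ a := rpow_nonneg (hw.Wf_nonneg _) _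
  have hc : 0 ≤ c := rpow_nonneg (hw.Wf_nonneg _) _
  rcases le_or_gt ν (1 / 16) with hsmall | hlarge
  · have h := Wf_rpow_mul_log_le (b := b) hp hu hw hC hH (mul_pos hb hν.1) (by nlinarith)
    rw [show b / (4 * (b * ν)) = 1 / (4 * ν) by field_simp] at h
    calc (1 + log (1 / ν)) * a ≤ 4 * log (1 / (4 * ν)) * a := by
          gcongr; exact one_add_log_one_div_le_four_mul_log hν.1 hsmall
      _ = 4 * π * (a * (π⁻¹ * log (1 / (4 * ν)))) := by field_simp
      _ ≤ 4 * π * (C * c) := by gcongr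
      _ ≤ 4 * max (π * C) 1 * c := by rw [← mul_assoc, mul_assoc 4]; gcongr; exact le_max_left _ _
  · have hac : a ≤ c := rpow_le_rpow (hw.Wf_nonneg _) (hw.monotone_Wf
      (hu.setIntegral_Ioo_mono (by nlinarith [hν.2]) (by nlinarith [hν.2]))) (by positivity)
    calc (1 + log (1 / ν)) * a ≤ 4 * 1 * c := by
          rw [mul_one]; exact mul_le_mul (one_add_log_one_div_le_four hlarge) hac ha (by norm_num)
      _ ≤ 4 * max (π * C) 1 * c := by gcongr; exact le_max_right _ _

lemma le_rpow_mul_rpow_neg_mul_of_mul_rpow_le {p L K a c : ℝ} (hp : 0 < p) (hL : 0 < L)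
    (hK : 0 ≤ K) (ha : 0 ≤ a) (hc : 0 ≤ c) (h : L * a ^ (1 / p) ≤ K * c ^ (1 / p)) :
    a ≤ K ^ p * L ^ (-p) * c := by
  have h' : a ^ (1 / p) ≤ K * L⁻¹ * c ^ (1 / p) := by
    rw [mul_right_comm, ← div_eq_mul_inv, le_div_iff₀ hL]; linarith
  calc a = (a ^ (1 / p)) ^ p := by rw [← rpow_mul ha, one_div_mul_cancel hp.ne', rpow_one]
    _ ≤ (K * L⁻¹ * c ^ (1 / p)) ^ p := by gcongr
    _ = K ^ p * L ^ (-p) * c := by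
      rw [mul_rpow (by positivity) (by positivity), mul_rpow hK (inv_nonneg.mpr hL.le),
        inv_rpow hL.le, ← rpow_neg hL.le, ← rpow_mul hc, one_div_mul_cancel hp.ne', rpow_one]

/-- the weak-type inequality on characteristic functions of intervals `(0,b)`
implies the logarithmic estimate for `W ∘ u`. -/
theorem log_estimate_of_weak_type (p : ℝ) (hp : 0 < p) (u w : ℝ → ℝ)
    (hu : IsWeight u) (hw : IsWeightOn w)
    (h : ∃ C : ℝ, 0 < C ∧ ∀ b : ℝ, 0 < b →
      weakLorentzNorm p u w (hilbert ((Set.Ioo (0:ℝ) b).indicator fun _ => (1:ℝ)))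
        ≤ ENNReal.ofReal C * lorentzNorm p u w ((Set.Ioo (0:ℝ) b).indicator fun _ => (1:ℝ))) :
    ∃ C' : ℝ, 0 < C' ∧ ∀ ν : ℝ, ν ∈ Set.Ioc (0:ℝ) 1 → ∀ b : ℝ, 0 < b →
      Wf w (∫ s in Set.Ioo (-(b*ν)) (b*ν), u s)
        ≤ C' * (1 + Real.log (1/ν)) ^ (-p) * Wf w (∫ s in Set.Ioo (-b) b, u s) := by
  obtain ⟨C, hC, hH⟩ := h
  refine ⟨(4 * max (π * C) 1) ^ p, by positivity, fun ν hν b hb => ?_⟩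
  have hL : 0 < 1 + log (1 / ν) := by
    linarith [log_nonneg (one_le_one_div hν.1 hν.2)]
  exact le_rpow_mul_rpow_neg_mul_of_mul_rpow_le hp hL (by positivity) (hw.Wf_nonneg _)
    (hw.Wf_nonneg _) (one_add_log_mul_Wf_rpow_le hp hu hw hC.le hH hν hb)
end
end

section
/- Let 0 < p < ∞ and let u, w be weights on ℝ and (0,∞) respectively. Suppose there is a constant C such that for every b > 0, ‖Hχ_(0,b)‖_{Λ^{p,∞}_u(w)} ≤ C ‖χ_(0,b)‖_{Λ^p_u(w)}. Then ∫_ℝ u(x) dx = ∞ and ∫_0^∞ w(t) dt = ∞; that is, u ∉ L^1(ℝ) and w ∉ L^1(0,∞). -/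
open MeasureTheory Filter Topology
open scoped ENNReal NNReal

noncomputable section

/-
For `x ∈ (-2,-1)` the Hilbert transform of `χ_(0,b)` equals `-(1/π) log((b-x)/(-x))`, of
modulus at least `(1/π) log(1 + b/2)`. As `u((-2,-1)) > 0`, the rearrangement of `Hχ_(0,b)` is at
least this large at some `t₀ > 0`, so
`‖Hχ_(0,b)‖_{Λ^{p,∞}_u(w)} ≥ W(t₀)^{1/p} (1/π) log(1 + b/2) → ∞` as `b → ∞`.
On the other hand `(χ_(0,b))*_u = χ_[0,u(0,b))`, so `‖χ_(0,b)‖_{Λ^p_u(w)} ≤ (∫_0^{u(ℝ)} w)^{1/p}`,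
which is bounded in `b` as soon as `u ∈ L¹(ℝ)` or `w ∈ L¹(0,∞)`.
-/

section Rearrangement

variable {u : ℝ → ℝ} {g : ℝ → ℝ≥0∞} {t : ℝ}

lemma le_rearrE_of_forall_le {c : ℝ≥0∞} {S : Set ℝ} (hS : ∀ x ∈ S, c ≤ g x)
    (hm : ENNReal.ofReal t < wMeas u S) : c ≤ rearrE u g t := by
  refine le_sInf fun s hs => ?_
  by_contra! hsc
  have hsub : S ⊆ {x | s < g x} := fun x hx => hsc.trans_le (hS x hx)
  exact hm.not_ge ((lintegral_mono_set hsub).trans hs)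

lemma rearrE_le_of_forall_le {c : ℝ≥0∞} (hg : ∀ x, g x ≤ c) : rearrE u g t ≤ c := by
  refine sInf_le ?_
  have hempty : {x | c < g x} = ∅ := Set.eq_empty_of_forall_notMem fun x => (hg x).not_gt
  simp [wMeas, hempty]

lemma rearrE_eq_zero_of_wMeas_le {S : Set ℝ} (hg : ∀ x ∉ S, g x = 0)
    (ht : wMeas u S ≤ ENNReal.ofReal t) : rearrE u g t = 0 := by
  refine le_antisymm (sInf_le ?_) bot_le
  refine le_trans (lintegral_mono_set fun x hx => ?_) ht
  by_contra hxS
  simp [hg x hxS] at hx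

end Rearrangement

section LorentzNorm

variable {p : ℝ} {u w : ℝ → ℝ} {g : ℝ → ℝ≥0∞}

lemma rearrE_rpow_mul_le (hp : 0 ≤ p) (hg : ∀ x, g x ≤ 1) {t : ℝ} (c : ℝ≥0∞) :
    rearrE u g t ^ p * c ≤ c :=
  mul_le_of_le_one_left' (ENNReal.rpow_le_one (rearrE_le_of_forall_le hg) hp)

lemma lorentzNormE_le_of_le_one (hp : 0 < p) (hg : ∀ x, g x ≤ 1) :
    lorentzNormE p u w g ≤ (∫⁻ t in Set.Ioi 0, ENNReal.ofReal (w t)) ^ (1 / p) :=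
  ENNReal.rpow_le_rpow (lintegral_mono fun _ => rearrE_rpow_mul_le hp.le hg _) (by positivity)

lemma lorentzNormE_le_of_wMeas_le (hp : 0 < p) (hg : ∀ x, g x ≤ 1) {S : Set ℝ}
    (hgS : ∀ x ∉ S, g x = 0) {M : ℝ} (hM : wMeas u S ≤ ENNReal.ofReal M) :
    lorentzNormE p u w g ≤ (∫⁻ t in Set.Ioo 0 M, ENNReal.ofReal (w t)) ^ (1 / p) := by
  refine ENNReal.rpow_le_rpow ?_ (by positivity)
  calc ∫⁻ t in Set.Ioi 0, rearrE u g t ^ p * ENNReal.ofReal (w t)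
      ≤ ∫⁻ t in Set.Ioi 0, (Set.Ioo 0 M).indicator (fun t => ENNReal.ofReal (w t)) t := by
        refine setLIntegral_mono' measurableSet_Ioi fun t ht => ?_
        by_cases htM : t < M
        · rw [Set.indicator_of_mem (show t ∈ Set.Ioo 0 M from ⟨ht, htM⟩)]
          exact rearrE_rpow_mul_le hp.le hg _
        · have hzero : rearrE u g t = 0 :=
            rearrE_eq_zero_of_wMeas_le hgS (hM.trans (ENNReal.ofReal_le_ofReal (not_lt.mp htM)))
          simp [hzero, ENNReal.zero_rpow_of_pos hp]
    _ = ∫⁻ t in Set.Ioo 0 M, ENNReal.ofReal (w t) := by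
        rw [lintegral_indicator measurableSet_Ioo, Measure.restrict_restrict measurableSet_Ioo,
          Set.inter_eq_self_of_subset_left Set.Ioo_subset_Ioi_self]

end LorentzNorm

lemma ofReal_abs_indicator_one_le (S : Set ℝ) (x : ℝ) :
    ENNReal.ofReal |S.indicator (fun _ => (1:ℝ)) x| ≤ 1 := by
  by_cases hx : x ∈ S <;> simp [hx]

lemma IsWeight.wMeas_pos {u : ℝ → ℝ} (hu : IsWeight u) {S : Set ℝ} (hS : 0 < volume S) :
    0 < wMeas u S := by
  have hmeas : AEMeasurable (fun x => ENNReal.ofReal (u x)) :=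
    hu.2.aestronglyMeasurable.aemeasurable.ennreal_ofReal
  have hsupport : {x | ENNReal.ofReal (u x) ≠ 0} = Set.univ :=
    Set.eq_univ_of_forall fun x => (ENNReal.ofReal_pos.mpr (hu.1 x)).ne'
  rw [wMeas, ← withDensity_apply' _ S, pos_iff_ne_zero, Ne, withDensity_apply_eq_zero' hmeas,
    hsupport, Set.univ_inter]
  exact hS.ne'

lemma IsWeightOn.Wf_pos {w : ℝ → ℝ} (hw : IsWeightOn w) {t : ℝ} (ht : 0 < t) :
    0 < Wf w t := by
  have hnonneg : 0 ≤ᵐ[volume.restrict (Set.Ioo 0 t)] w :=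
    (ae_restrict_iff' measurableSet_Ioo).mpr (ae_of_all _ fun s hs => (hw.1 s hs.1).le)
  have hsupport : Set.Ioo 0 t ⊆ Function.support w := fun s hs => (hw.1 s hs.1).ne'
  rw [Wf, setIntegral_pos_iff_support_of_nonneg_ae hnonneg (hw.2 t ht),
    Set.inter_eq_self_of_subset_right hsupport, Real.volume_Ioo]
  simpa using ht

lemma pvIntegral_indicator_Ioo_of_lt {a b x ε : ℝ} (hab : a ≤ b) (hxa : x < a)
    (hxε : ε < a - x) :
    pvIntegral ((Set.Ioo a b).indicator fun _ => (1:ℝ)) x ε = -Real.log ((b - x) / (a - x)) := by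
  have hsub : Set.Ioo a b ⊆ {y : ℝ | ε < |x - y|} := fun y hy => by
    rw [Set.mem_ofPred_eq, abs_sub_comm, abs_of_pos (by linarith [hy.1])]
    linarith [hy.1]
  have hfun : (fun y => (Set.Ioo a b).indicator (fun _ => (1:ℝ)) y / (x - y))
      = (Set.Ioo a b).indicator fun y => -(y - x)⁻¹ := by
    ext y
    by_cases hy : y ∈ Set.Ioo a b <;> simp [hy, ← inv_neg]
  have hx : 0 ∉ Set.uIcc (a - x) (b - x) := Set.notMem_uIcc_of_lt (by linarith) (by linarith)
  rw [pvIntegral, hfun, setIntegral_indicator measurableSet_Ioo,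
    Set.inter_eq_self_of_subset_right hsub, ← integral_Ioc_eq_integral_Ioo,
    ← intervalIntegral.integral_of_le hab, intervalIntegral.integral_neg,
    intervalIntegral.integral_comp_sub_right (fun y => y⁻¹) x, integral_inv hx]

lemma hilbert_indicator_Ioo_of_lt {a b x : ℝ} (hab : a ≤ b) (hxa : x < a) :
    hilbert ((Set.Ioo a b).indicator fun _ => (1:ℝ)) x
      = -(1 / Real.pi * Real.log ((b - x) / (a - x))) := by
  refine Tendsto.limUnder_eq (tendsto_const_nhds.congr' ?_)
  filter_upwards [Ioo_mem_nhdsGT (sub_pos.mpr hxa)] with ε hε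
  rw [pvIntegral_indicator_Ioo_of_lt hab hxa hε.2, mul_neg]

lemma log_le_abs_hilbert_indicator_Ioo {b x : ℝ} (hb : 0 ≤ b) (hx : x ∈ Set.Ico (-2) 0) :
    1 / Real.pi * Real.log (1 + b / 2)
      ≤ |hilbert ((Set.Ioo 0 b).indicator fun _ => (1:ℝ)) x| := by
  have hx0 : 0 < -x := by linarith [hx.2]
  have hratio : 1 + b / 2 ≤ (b - x) / (0 - x) := by
    rw [zero_sub, le_div_iff₀ hx0]
    nlinarith [hx.1]
  rw [hilbert_indicator_Ioo_of_lt hb hx.2, abs_neg]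
  refine le_trans ?_ (le_abs_self _)
  gcongr

lemma tendsto_weakLorentzNorm_hilbert_indicator_Ioo {p : ℝ} {u w : ℝ → ℝ} (hu : IsWeight u)
    (hw : IsWeightOn w) :
    Tendsto (fun b => weakLorentzNorm p u w (hilbert ((Set.Ioo 0 b).indicator fun _ => (1:ℝ))))
      atTop (𝓝 ∞) := by
  obtain ⟨t₀, -, ht₀pos, ht₀lt⟩ := ENNReal.lt_iff_exists_real_btwn.mp
    (hu.wMeas_pos (S := Set.Ioo (-2) (-1)) (by norm_num))
  have ht₀ : 0 < t₀ := ENNReal.ofReal_pos.mp ht₀pos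
  set A := ENNReal.ofReal (Wf w t₀) ^ (1 / p)
  have hA : A ≠ 0 := (ENNReal.rpow_pos (ENNReal.ofReal_pos.mpr (hw.Wf_pos ht₀))
    ENNReal.ofReal_ne_top).ne'
  have hlog : Tendsto (fun b : ℝ => 1 / Real.pi * Real.log (1 + b / 2)) atTop atTop :=
    (Real.tendsto_log_atTop.comp (tendsto_atTop_add_const_left _ 1
      (tendsto_id.atTop_div_const two_pos))).const_mul_atTop (by positivity)
  have hlower : Tendsto (fun b => A * ENNReal.ofReal (1 / Real.pi * Real.log (1 + b / 2)))
      atTop (𝓝 ∞) := by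
    simpa [ENNReal.mul_top hA] using ENNReal.Tendsto.const_mul (a := A)
      (ENNReal.tendsto_ofReal_atTop.comp hlog) (Or.inl ENNReal.top_ne_zero)
  refine tendsto_nhds_top_mono hlower ?_
  filter_upwards [eventually_ge_atTop 0] with b hb
  have hrearr := le_rearrE_of_forall_le (u := u) (t := t₀) (S := Set.Ioo (-2) (-1))
    (fun x hx => ENNReal.ofReal_le_ofReal
      (log_le_abs_hilbert_indicator_Ioo hb ⟨hx.1.le, hx.2.trans (by norm_num)⟩)) ht₀lt
  exact le_iSup₂_of_le t₀ ht₀ (by gcongr)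

/-- the weak-type inequality on characteristic functions of intervals `(0,b)`
forces `u ∉ L¹(ℝ)` and `w ∉ L¹(0,∞)`. -/
theorem not_integrable_of_weak_type (p : ℝ) (hp : 0 < p) (u w : ℝ → ℝ)
    (hu : IsWeight u) (hw : IsWeightOn w)
    (h : ∃ C : ℝ, 0 < C ∧ ∀ b : ℝ, 0 < b →
      weakLorentzNorm p u w (hilbert ((Set.Ioo (0:ℝ) b).indicator fun _ => (1:ℝ)))
        ≤ ENNReal.ofReal C * lorentzNorm p u w ((Set.Ioo (0:ℝ) b).indicator fun _ => (1:ℝ))) :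
    (∫⁻ x : ℝ, ENNReal.ofReal (u x)) = ∞ ∧
      (∫⁻ t in Set.Ioi (0:ℝ), ENNReal.ofReal (w t)) = ∞ := by
  obtain ⟨C, -, hC⟩ := h
  have unbounded : ∀ B ≠ ∞,
      ¬ ∀ b > 0, lorentzNorm p u w ((Set.Ioo 0 b).indicator fun _ => (1:ℝ)) ≤ B := by
    intro B hB hbdd
    obtain ⟨b, hlt, hb⟩ := ((tendsto_weakLorentzNorm_hilbert_indicator_Ioo hu hw).eventually
      (lt_mem_nhds (ENNReal.mul_ne_top ENNReal.ofReal_ne_top hB).lt_top)).and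
      (eventually_gt_atTop 0) |>.exists
    exact hlt.not_ge ((hC b hb).trans (by gcongr; exact hbdd b hb))
  constructor
  · by_contra hU
    set M := (∫⁻ x, ENNReal.ofReal (u x)).toReal + 1
    refine unbounded _ (ENNReal.rpow_ne_top_of_nonneg (by positivity)
      (hw.2 M (by positivity)).lintegral_lt_top.ne) fun b _ =>
        lorentzNormE_le_of_wMeas_le hp (ofReal_abs_indicator_one_le _) (S := Set.Ioo 0 b)
          (fun x hx => by simp [hx]) ?_
    calc wMeas u (Set.Ioo 0 b) ≤ ∫⁻ x, ENNReal.ofReal (u x) := setLIntegral_le_lintegral _ _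
      _ = ENNReal.ofReal (∫⁻ x, ENNReal.ofReal (u x)).toReal := (ENNReal.ofReal_toReal hU).symm
      _ ≤ ENNReal.ofReal M := ENNReal.ofReal_le_ofReal (le_add_of_nonneg_right zero_le_one)
  · by_contra hW
    exact unbounded _ (ENNReal.rpow_ne_top_of_nonneg (by positivity) hW) fun b _ =>
      lorentzNormE_le_of_le_one hp (ofReal_abs_indicator_one_le _)
end
end

section
/- Let 0 < p < ∞, let k, l > −1, and consider the weights u(x) = |x|^k on ℝ and w(t) = t^l on (0,∞), so that W(r) = r^{l+1}/(l+1). Suppose there is a constant C such that for every bounded interval I and every measurable set E ⊆ I with |E| > 0, W(u(I)) ≤ C (|I|/|E|)^p · W(u(E)). Then (k+1)(l+1) ≤ p. -/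
open MeasureTheory Filter Topology
open scoped ENNReal NNReal

noncomputable section

lemma aux_pow_int (q r : ℝ) (hq : -1 < q) (hr : 0 < r) :
    ∫ x in Set.Ioo (0:ℝ) r, x ^ q = r ^ (q + 1) / (q + 1) := by
  rw [← MeasureTheory.integral_Ioc_eq_integral_Ioo, ← intervalIntegral.integral_of_le hr.le,
    integral_rpow (Or.inl hq), Real.zero_rpow (by linarith), sub_zero]

lemma aux_wInt_abs (k r : ℝ) (hk : -1 < k) (hr : 0 < r) :
    wInt (fun x => |x| ^ k) (Set.Ioo 0 r) = r ^ (k + 1) / (k + 1) := by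
  unfold wInt
  rw [MeasureTheory.setIntegral_congr_fun measurableSet_Ioo
    (fun x hx => by simp [abs_of_pos hx.1] : Set.EqOn (fun x => |x| ^ k) (fun x => x ^ k)
      (Set.Ioo 0 r))]
  exact aux_pow_int k r hk hr

lemma aux_Wf (l r : ℝ) (hl : -1 < l) (hr : 0 < r) :
    Wf (fun t => t ^ l) r = r ^ (l + 1) / (l + 1) :=
  aux_pow_int l r hl hr

/-- for power weights `u(x) = |x|^k`, `w(t) = t^l`, the quasi-concavity type
condition forces `(k+1)(l+1) ≤ p`. -/
theorem power_weights_condition (p k l : ℝ) (hp : 0 < p) (hk : -1 < k) (hl : -1 < l)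
    (h : ∃ C : ℝ, 0 < C ∧ ∀ a b : ℝ, a < b → ∀ E : Set ℝ, MeasurableSet E →
      E ⊆ Set.Ioo a b → 0 < (volume E).toReal →
      Wf (fun t => t ^ l) (wInt (fun x => |x| ^ k) (Set.Ioo a b))
        ≤ C * ((b - a) / (volume E).toReal) ^ p *
            Wf (fun t => t ^ l) (wInt (fun x => |x| ^ k) E)) :
    (k + 1) * (l + 1) ≤ p := by
  by_contra hcon
  push_neg at hcon
  set α := (k + 1) * (l + 1) with hα_def
  have hk1 : (0:ℝ) < k + 1 := by linarith
  have hl1 : (0:ℝ) < l + 1 := by linarith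
  have hαp : 0 < α - p := by linarith
  obtain ⟨C, hC, hcond⟩ := h
  set ε : ℝ := min ((1 / (2 * C)) ^ (α - p)⁻¹) (1 / 2) with hε_def
  have hbase : (0:ℝ) < 1 / (2 * C) := by positivity
  have hε0 : 0 < ε := lt_min (Real.rpow_pos_of_pos hbase _) (by norm_num)
  have hε1 : ε < 1 := lt_of_le_of_lt (min_le_right _ _) (by norm_num)
  have hvol : (volume (Set.Ioo (0:ℝ) ε)).toReal = ε := by
    rw [Real.volume_Ioo, sub_zero, ENNReal.toReal_ofReal hε0.le]
  have key := hcond 0 1 one_pos (Set.Ioo 0 ε) measurableSet_Ioo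
    (Set.Ioo_subset_Ioo le_rfl hε1.le) (by rw [hvol]; exact hε0)
  rw [hvol] at key
  rw [aux_wInt_abs k 1 hk one_pos, aux_wInt_abs k ε hk hε0,
    Real.one_rpow] at key
  have hu1 : (0:ℝ) < 1 / (k + 1) := by positivity
  have huε : (0:ℝ) < ε ^ (k + 1) / (k + 1) := by positivity
  rw [aux_Wf l _ hl hu1, aux_Wf l _ hl huε] at key
  have hrw : (ε ^ (k + 1) / (k + 1)) ^ (l + 1) = ε ^ α * (1 / (k + 1)) ^ (l + 1) := by
    rw [Real.div_rpow (by positivity) hk1.le, ← Real.rpow_mul hε0.le, ← hα_def,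
      Real.div_rpow (by norm_num) hk1.le, Real.one_rpow]
    ring
  rw [hrw] at key
  set K : ℝ := (1 / (k + 1)) ^ (l + 1) / (l + 1) with hK_def
  have hK : 0 < K := by positivity
  have key2 : K ≤ C * (1 / ε) ^ p * (ε ^ α * K) := by
    have : ε ^ α * (1 / (k + 1)) ^ (l + 1) / (l + 1) = ε ^ α * K := by
      rw [hK_def]; ring
    rw [this] at key
    calc K = (1 / (k + 1)) ^ (l + 1) / (l + 1) := rfl
      _ ≤ C * ((1 - 0) / ε) ^ p * (ε ^ α * K) := key
      _ = C * (1 / ε) ^ p * (ε ^ α * K) := by rw [sub_zero]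
  have hpow : (1 / ε) ^ p * ε ^ α = ε ^ (α - p) := by
    rw [one_div, Real.inv_rpow hε0.le, ← Real.rpow_neg hε0.le, ← Real.rpow_add hε0]
    ring_nf
  have key3 : 1 ≤ C * ε ^ (α - p) := by
    have h1 : K ≤ C * ε ^ (α - p) * K := by
      calc K ≤ C * (1 / ε) ^ p * (ε ^ α * K) := key2
        _ = C * ((1 / ε) ^ p * ε ^ α) * K := by ring
        _ = C * ε ^ (α - p) * K := by rw [hpow]
    nlinarith [mul_le_mul_of_nonneg_right (le_of_mul_le_mul_right (by linarith) hK) hK.le]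
  have hεle : ε ^ (α - p) ≤ 1 / (2 * C) := by
    calc ε ^ (α - p) ≤ ((1 / (2 * C)) ^ (α - p)⁻¹) ^ (α - p) :=
          Real.rpow_le_rpow hε0.le (min_le_left _ _) hαp.le
      _ = 1 / (2 * C) := by
          rw [← Real.rpow_mul hbase.le, inv_mul_cancel₀ hαp.ne', Real.rpow_one]
  have : C * ε ^ (α - p) ≤ 1 / 2 := by
    calc C * ε ^ (α - p) ≤ C * (1 / (2 * C)) :=
          mul_le_mul_of_nonneg_left hεle hC.le
      _ = 1 / 2 := by field_simp
  linarith
end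
end
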